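/- Let K be a totally real number field of degree d. For every positive definite quadratic form Q in n variables over K, min(Q) ≤ σ_{n,K} · N_{K/Q}(det Q)^{1/n}, where σ_{n,K} = 4^d · ω_n^{−2d/n} · |d_K| and min(Q) = min{ N_{K/Q}(Q(x)) : 0 ≠ x ∈ Oⁿ }. -/

import Mathlib

open NumberField Module Matrix MeasureTheory
open scoped Kronecker

/-!
Minkowski's convex body theorem, applied to the image of `(𝓞 K)ⁿ` in `∏_ν ℝⁿ` under the real
embeddings `ν` of `K`. This image is a lattice of covolume `√|d_K|ⁿ`, while the product of the
ellipsoids `{z | Qᵛ(z) ≤ r²}` is a symmetric convex body of volume `(ω_n rⁿ)ᵈ / √N(det Q)`.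
Choosing `r^(2d) = σ_{n,K} · N(det Q)^(1/n)` makes this volume exactly `2^(dn)` times the
covolume, so the body contains a nonzero lattice point `x`, and then
`N(Q(x)) = ∏_ν Qᵛ(ν x) ≤ r^(2d)`.
-/

section SquareRoot

variable {ι : Type*} [Fintype ι] [DecidableEq ι]
open MatrixOrder

lemma Matrix.PosSemidef.dotProduct_mulVec_eq_sqrt {M : Matrix ι ι ℝ} (hM : M.PosSemidef)
    (z : ι → ℝ) : z ⬝ᵥ M *ᵥ z = (CFC.sqrt M *ᵥ z) ⬝ᵥ (CFC.sqrt M *ᵥ z) := by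
  have hsymm : (CFC.sqrt M)ᵀ = CFC.sqrt M := by
    simpa using (CFC.sqrt_nonneg M).posSemidef.isHermitian.eq
  conv_lhs => rw [← CFC.sqrt_mul_sqrt_self M hM.nonneg]
  rw [← mulVec_mulVec, dotProduct_mulVec, ← hsymm, vecMul_transpose, hsymm]

lemma Matrix.PosDef.det_sqrt {M : Matrix ι ι ℝ} (hM : M.PosDef) :
    (CFC.sqrt M).det = √M.det := by
  rw [hM.posSemidef.det_sqrt, RCLike.sqrt_of_nonneg hM.posSemidef.det_nonneg]
  rfl

end SquareRoot

lemma RingHom.map_dotProduct_mulVec {R S ι : Type*} [Fintype ι] [CommSemiring R] [CommSemiring S]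
    (f : R →+* S) (M : Matrix ι ι R) (v w : ι → R) :
    f (v ⬝ᵥ M *ᵥ w) = (f ∘ v) ⬝ᵥ M.map f *ᵥ (f ∘ w) := by
  rw [RingHom.map_dotProduct]
  congr 1
  ext i
  exact RingHom.map_mulVec f M w i

/-- `ω_n`, the volume of the unit ball of `ℝⁿ`. -/
noncomputable def unitBallVolume (n : ℕ) : ℝ :=
  Real.pi ^ ((n : ℝ) / 2) / Real.Gamma ((n : ℝ) / 2 + 1)

lemma unitBallVolume_pos (n : ℕ) : 0 < unitBallVolume n := by
  unfold unitBallVolume; positivity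

section Ellipsoid

variable {ι : Type*} [Fintype ι]

def ellipsoid (M : Matrix ι ι ℝ) (r : ℝ) : Set (ι → ℝ) := {z | z ⬝ᵥ M *ᵥ z ≤ r ^ 2}

lemma neg_mem_ellipsoid {M : Matrix ι ι ℝ} {r : ℝ} {z : ι → ℝ} (hz : z ∈ ellipsoid M r) :
    -z ∈ ellipsoid M r := by
  simpa [ellipsoid, mulVec_neg] using hz

variable [DecidableEq ι]
open MatrixOrder

lemma ellipsoid_one {r : ℝ} (hr : 0 ≤ r) :
    ellipsoid (1 : Matrix ι ι ℝ) r = EuclideanSpace.equiv ι ℝ '' Metric.closedBall 0 r := by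
  ext z
  rw [← (EuclideanSpace.equiv ι ℝ).symm_symm, ContinuousLinearEquiv.image_symm_eq_preimage]
  simp [ellipsoid, EuclideanSpace.norm_eq, dotProduct, ← sq, Real.sqrt_le_left hr]

lemma ellipsoid_eq_image {M : Matrix ι ι ℝ} (hM : M.PosDef) (r : ℝ) :
    ellipsoid M r = toLin' (CFC.sqrt M)⁻¹ '' ellipsoid 1 r := by
  have hdet : IsUnit (CFC.sqrt M).det := by
    rw [hM.det_sqrt]; exact (Real.sqrt_pos.2 hM.det_pos).ne'.isUnit
  ext z
  simp only [ellipsoid, Set.mem_ofPred_eq, Set.mem_image, one_mulVec, toLin'_apply]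
  constructor
  · intro hz
    refine ⟨CFC.sqrt M *ᵥ z, ?_, by rw [mulVec_mulVec, nonsing_inv_mul _ hdet, one_mulVec]⟩
    rwa [← hM.posSemidef.dotProduct_mulVec_eq_sqrt]
  · rintro ⟨w, hw, rfl⟩
    rwa [hM.posSemidef.dotProduct_mulVec_eq_sqrt, mulVec_mulVec, mul_nonsing_inv _ hdet,
      one_mulVec]

variable {M : Matrix ι ι ℝ} (hM : M.PosDef) {r : ℝ} (hr : 0 ≤ r)
include hM hr

lemma isCompact_ellipsoid : IsCompact (ellipsoid M r) := by
  rw [ellipsoid_eq_image hM, ellipsoid_one hr, Set.image_image]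
  exact (isCompact_closedBall _ _).image (by fun_prop)

lemma convex_ellipsoid : Convex ℝ (ellipsoid M r) := by
  rw [ellipsoid_eq_image hM, ellipsoid_one hr, Set.image_image]
  exact (convex_closedBall _ _).linear_image
    (toLin' (CFC.sqrt M)⁻¹ ∘ₗ (EuclideanSpace.equiv ι ℝ).toLinearMap)

lemma volume_ellipsoid [Nonempty ι] : volume (ellipsoid M r) =
    ENNReal.ofReal ((√M.det)⁻¹ * r ^ Fintype.card ι * unitBallVolume (Fintype.card ι)) := by
  have hpi : √Real.pi ^ Fintype.card ι = Real.pi ^ ((Fintype.card ι : ℝ) / 2) := by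
    rw [Real.sqrt_eq_rpow, ← Real.rpow_natCast, ← Real.rpow_mul Real.pi_pos.le]
    ring_nf
  have hball : volume (ellipsoid (1 : Matrix ι ι ℝ) r) =
      volume (Metric.closedBall (0 : EuclideanSpace ℝ ι) r) := by
    rw [ellipsoid_one hr, ContinuousLinearEquiv.image_eq_preimage_symm]
    exact (PiLp.volume_preserving_toLp ι).measure_preimage
      measurableSet_closedBall.nullMeasurableSet
  rw [ellipsoid_eq_image hM, Measure.addHaar_image_linearMap, LinearMap.det_toLin',
    det_nonsing_inv, hM.det_sqrt, hball, EuclideanSpace.volume_closedBall,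
    ← ENNReal.ofReal_pow hr, ← ENNReal.ofReal_mul (by positivity),
    ← ENNReal.ofReal_mul (by positivity), Ring.inverse_eq_inv', abs_of_nonneg (by positivity),
    mul_assoc, hpi, unitBallVolume]

end Ellipsoid

theorem MeasureTheory.volume_preserving_curry (ι κ X : Type*) [Fintype ι] [Fintype κ]
    [MeasureSpace X] [SigmaFinite (volume : Measure X)] :
    MeasurePreserving (MeasurableEquiv.curry ι κ X) volume volume := by
  refine MeasurePreserving.symm _ ⟨(MeasurableEquiv.curry ι κ X).symm.measurable, ?_⟩
  refine (Measure.pi_eq fun s hs => ?_).symm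
  rw [MeasurableEquiv.map_apply]
  have : (MeasurableEquiv.curry ι κ X).symm ⁻¹' Set.univ.pi s =
      Set.univ.pi fun i => Set.univ.pi fun j => s (i, j) := by
    ext; simp [MeasurableEquiv.coe_curry_symm]
  rw [this, volume_pi_pi]
  simp_rw [volume_pi_pi]
  rw [← Finset.prod_product']
  rfl

theorem exists_ne_zero_intCast_vecMul_mem {ι : Type*} [Fintype ι] [DecidableEq ι] [Nonempty ι]
    {B : Matrix ι ι ℝ} (hB : B.det ≠ 0) {s : Set (ι → ℝ)} (h_symm : ∀ x ∈ s, -x ∈ s)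
    (h_conv : Convex ℝ s) (h_cpt : IsCompact s)
    (h_vol : ENNReal.ofReal (2 ^ Fintype.card ι * |B.det|) ≤ volume s) :
    ∃ c : ι → ℤ, c ≠ 0 ∧ (fun i => (c i : ℝ)) ᵥ* B ∈ s := by
  let b : Basis ι ℝ (ι → ℝ) := basisOfLinearIndependentOfCardEqFinrank
    (linearIndependent_rows_of_det_ne_zero hB) (finrank_fintype_fun_eq_card ℝ).symm
  have hb : Matrix.of b = B := by ext; simp [b]
  have : Countable (Submodule.span ℤ (Set.range b)).toAddSubgroup :=
    inferInstanceAs (Countable (Submodule.span ℤ (Set.range b)))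
  rw [ENNReal.ofReal_mul (by positivity), ENNReal.ofReal_pow zero_le_two, ENNReal.ofReal_ofNat,
    mul_comm, ← hb, ← ZSpan.volume_fundamentalDomain, ← finrank_fintype_fun_eq_card ℝ] at h_vol
  obtain ⟨⟨y, hy⟩, hy0, hys⟩ := exists_ne_zero_mem_lattice_of_measure_mul_two_pow_le_measure
    (ZSpan.isAddFundamentalDomain' b volume) h_symm h_conv h_cpt h_vol
  obtain ⟨c, rfl⟩ := (Submodule.mem_span_range_iff_exists_fun ℤ).1 hy
  refine ⟨c, by rintro rfl; simp at hy0, ?_⟩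
  convert hys using 1
  ext j
  simp [vecMul, dotProduct, ← hb]

theorem exists_ne_zero_transpose_mul_intCast_mem {κ ι : Type*} [Fintype κ] [Fintype ι]
    [DecidableEq κ] [DecidableEq ι] [Nonempty κ] [Nonempty ι] {A : Matrix κ κ ℝ} (hA : A.det ≠ 0)
    {E : κ → Set (ι → ℝ)} (h_symm : ∀ k, ∀ x ∈ E k, -x ∈ E k) (h_conv : ∀ k, Convex ℝ (E k))
    (h_cpt : ∀ k, IsCompact (E k))
    (h_vol : ENNReal.ofReal (2 ^ (Fintype.card κ * Fintype.card ι) * |A.det| ^ Fintype.card ι) ≤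
      ∏ k, volume (E k)) :
    ∃ C : Matrix κ ι ℤ, C ≠ 0 ∧ ∀ k, (Aᵀ * C.map (Int.cast : ℤ → ℝ)) k ∈ E k := by
  -- After uncurrying to coordinates `κ × ι`, the matrices `Aᵀ * C` form the lattice spanned by
  -- the rows of `A ⊗ₖ 1`, and `∏ k, E k` becomes a single convex body.
  have hdet : (A ⊗ₖ (1 : Matrix ι ι ℝ)).det = A.det ^ Fintype.card ι := by
    simp [det_kronecker]
  obtain ⟨c, hc0, hc⟩ := exists_ne_zero_intCast_vecMul_mem (B := A ⊗ₖ (1 : Matrix ι ι ℝ))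
    (s := MeasurableEquiv.curry κ ι ℝ ⁻¹' Set.univ.pi E) (hdet ▸ pow_ne_zero _ hA)
    (fun y hy k _ => h_symm k _ (hy k trivial))
    ((convex_pi fun k _ => h_conv k).linear_preimage (LinearEquiv.curry ℝ ℝ κ ι).toLinearMap)
    (Homeomorph.piCurry.isCompact_preimage.2 (isCompact_univ_pi h_cpt)) (by
      rw [(volume_preserving_curry κ ι ℝ).measure_preimage_equiv, volume_pi_pi, hdet, abs_pow,
        Fintype.card_prod]
      exact h_vol)
  refine ⟨Matrix.of (Function.curry c), fun h => hc0 ?_, fun k => ?_⟩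
  · ext ⟨k, i⟩
    exact congrFun (congrFun h k) i
  · convert hc k trivial using 1
    ext i
    simp [vecMul, dotProduct, mul_apply, Fintype.sum_prod_type, one_apply, mul_comm]

lemma pow_mul_pow_eq_of_pow_two_mul_eq {d n : ℕ} (hn : n ≠ 0) {ω D N r : ℝ} (hω : 0 < ω)
    (hD : 0 ≤ D) (hN : 0 ≤ N) (hr : 0 ≤ r)
    (hσ : r ^ (2 * d) = 4 ^ d * ω ^ (-(2 * (d : ℝ)) / n) * D * N ^ ((1 : ℝ) / n)) :
    (r ^ n * ω) ^ d = 2 ^ (d * n) * √D ^ n * √N := by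
  refine (pow_left_inj₀ (by positivity) (by positivity) two_ne_zero).1 ?_
  have h1 : (ω ^ (-(2 * (d : ℝ)) / n)) ^ n = (ω ^ (2 * d))⁻¹ := by
    rw [← Real.rpow_mul_natCast hω.le, div_mul_cancel₀ _ (by exact_mod_cast hn),
      Real.rpow_neg hω.le]
    norm_cast
  have h2 : (N ^ ((1 : ℝ) / n)) ^ n = N := by
    rw [← Real.rpow_mul_natCast hN, one_div_mul_cancel (by exact_mod_cast hn), Real.rpow_one]
  calc ((r ^ n * ω) ^ d) ^ 2 = (r ^ (2 * d)) ^ n * ω ^ (2 * d) := by ring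
    _ = 4 ^ (d * n) * D ^ n * N := by
      rw [hσ, mul_pow, mul_pow, mul_pow, h1, h2]
      field_simp
      ring
    _ = (2 ^ (d * n) * √D ^ n * √N) ^ 2 := by
      rw [mul_pow, mul_pow, Real.sq_sqrt hN, pow_right_comm _ n 2, Real.sq_sqrt hD,
        pow_right_comm (2 : ℝ)]
      norm_num

section TotallyReal

variable {K : Type*} [Field K] [NumberField K]

noncomputable def realEmbeddingsEquivAlgHom (htr : Fintype.card (K →+* ℝ) = finrank ℚ K) :
    (K →+* ℝ) ≃ (K →ₐ[ℚ] ℂ) :=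
  Equiv.ofBijective (fun ν => (Complex.ofRealHom.comp ν).toRatAlgHom) <|
    (Fintype.bijective_iff_injective_and_card _).2 ⟨fun ν ν' h => by
      ext a
      exact Complex.ofReal_injective (congrArg (fun f : K →ₐ[ℚ] ℂ => f a) h),
      by rw [htr, AlgHom.card]⟩

@[simp]
lemma realEmbeddingsEquivAlgHom_apply (htr : Fintype.card (K →+* ℝ) = finrank ℚ K)
    (ν : K →+* ℝ) (a : K) : realEmbeddingsEquivAlgHom htr ν a = ν a := rfl

lemma norm_eq_prod_realEmbeddings (htr : Fintype.card (K →+* ℝ) = finrank ℚ K) (a : K) :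
    (Algebra.norm ℚ a : ℝ) = ∏ ν : K →+* ℝ, ν a := by
  apply Complex.ofReal_injective
  have := Algebra.norm_eq_prod_embeddings ℚ ℂ a
  rw [← (realEmbeddingsEquivAlgHom htr).prod_comp] at this
  push_cast
  simpa using this

lemma exists_basis_discr_eq_det_sq [DecidableEq (K →+* ℝ)]
    (htr : Fintype.card (K →+* ℝ) = finrank ℚ K) : ∃ b : Basis (K →+* ℝ) ℤ (𝓞 K),
      (discr K : ℝ) = (Matrix.of fun i (ν : K →+* ℝ) => ν (b i : K)).det ^ 2 := by
  let e : Free.ChooseBasisIndex ℤ (𝓞 K) ≃ (K →+* ℝ) := Fintype.equivOfCardEq <| by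
    rw [← finrank_eq_card_chooseBasisIndex, RingOfIntegers.rank, htr]
  refine ⟨(RingOfIntegers.basis K).reindex e, Complex.ofReal_injective ?_⟩
  have h := Algebra.discr_eq_det_embeddingsMatrixReindex_pow_two ℚ ℂ
    (integralBasis K ∘ e.symm) (realEmbeddingsEquivAlgHom htr)
  rw [Algebra.discr_reindex ℚ (integralBasis K) e, ← coe_discr] at h
  have hM : Algebra.embeddingsMatrixReindex ℚ ℂ (integralBasis K ∘ e.symm)
      (realEmbeddingsEquivAlgHom htr) = Complex.ofRealHom.mapMatrix
        (Matrix.of fun i (ν : K →+* ℝ) => ν ((RingOfIntegers.basis K).reindex e i : K)) := by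
    ext i ν
    simp [Algebra.embeddingsMatrixReindex, Algebra.embeddingsMatrix, integralBasis_apply]
  rw [hM, ← RingHom.map_det] at h
  simpa using h

end TotallyReal

section FormsOverTotallyRealFields

variable {K : Type*} [Field K] [NumberField K] (htr : Fintype.card (K →+* ℝ) = finrank ℚ K)
  {ι : Type*} [Fintype ι] [DecidableEq ι] {Q : Matrix ι ι K}
include htr

lemma norm_det_eq_prod_det_map (Q : Matrix ι ι K) :
    (Algebra.norm ℚ Q.det : ℝ) = ∏ ν : K →+* ℝ, (Q.map ν).det := by
  simp_rw [norm_eq_prod_realEmbeddings htr, ← RingHom.mapMatrix_apply, ← RingHom.map_det]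

lemma prod_volume_ellipsoid_map [Nonempty ι] (hpos : ∀ ν : K →+* ℝ, (Q.map ν).PosDef) {r : ℝ}
    (hr : 0 ≤ r) : ∏ ν : K →+* ℝ, volume (ellipsoid (Q.map ν) r) = ENNReal.ofReal
      ((√(Algebra.norm ℚ Q.det : ℝ))⁻¹ *
        (r ^ Fintype.card ι * unitBallVolume (Fintype.card ι)) ^ finrank ℚ K) := by
  rw [Finset.prod_congr rfl fun ν _ => volume_ellipsoid (hpos ν) hr,
    ← ENNReal.ofReal_prod_of_nonneg fun ν _ => mul_nonneg (by positivity) (unitBallVolume_pos _).le,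
    norm_det_eq_prod_det_map htr,
    Real.sqrt_prod _ fun ν _ => (hpos ν).det_pos.le, ← htr]
  simp only [mul_assoc, Finset.prod_mul_distrib, Finset.prod_const, Finset.card_univ,
    Finset.prod_inv_distrib, mul_pow]

theorem exists_ne_zero_norm_dotProduct_mulVec_le [Nonempty ι]
    (hpos : ∀ ν : K →+* ℝ, (Q.map ν).PosDef) {r : ℝ} (hr : 0 ≤ r)
    (h_vol : 2 ^ (finrank ℚ K * Fintype.card ι) * √|(discr K : ℝ)| ^ Fintype.card ι *
      √(Algebra.norm ℚ Q.det : ℝ) ≤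
        (r ^ Fintype.card ι * unitBallVolume (Fintype.card ι)) ^ finrank ℚ K) :
    ∃ x : ι → 𝓞 K, x ≠ 0 ∧ (Algebra.norm ℚ ((fun i => (x i : K)) ⬝ᵥ Q *ᵥ fun i => (x i : K)) : ℝ) ≤
      r ^ (2 * finrank ℚ K) := by
  classical
  have : Nonempty (K →+* ℝ) := Fintype.card_pos_iff.1 (htr ▸ finrank_pos)
  obtain ⟨b, hb⟩ := exists_basis_discr_eq_det_sq htr
  set A := Matrix.of fun i (ν : K →+* ℝ) => ν (b i : K)
  have hA : A.det ≠ 0 := fun h => discr_ne_zero K (by simpa [h] using hb)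
  have hN : 0 < √(Algebra.norm ℚ Q.det : ℝ) := Real.sqrt_pos.2 <| by
    rw [norm_det_eq_prod_det_map htr]; exact Finset.prod_pos fun ν _ => (hpos ν).det_pos
  obtain ⟨C, hC0, hC⟩ := exists_ne_zero_transpose_mul_intCast_mem hA
    (E := fun ν => ellipsoid (Q.map ν) r) (fun _ _ => neg_mem_ellipsoid)
    (fun ν => convex_ellipsoid (hpos ν) hr) (fun ν => isCompact_ellipsoid (hpos ν) hr) <| by
      rw [prod_volume_ellipsoid_map htr hpos hr, htr]
      refine ENNReal.ofReal_le_ofReal ((le_inv_mul_iff₀ hN).2 ?_)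
      rwa [hb, abs_pow, pow_two, Real.sqrt_mul_self (abs_nonneg _), mul_comm] at h_vol
  set x : ι → 𝓞 K := fun i => ∑ j, C j i • b j
  have hx : ∀ ν : K →+* ℝ, (fun i => ν (x i : K)) = (Aᵀ * C.map (Int.cast : ℤ → ℝ)) ν := by
    intro ν
    ext i
    simp [x, A, mul_apply, mul_comm]
  refine ⟨x, fun h => hC0 ?_, ?_⟩
  · ext j i
    exact Fintype.linearIndependent_iff.1 b.linearIndependent (fun j => C j i) (congrFun h i) j
  rw [norm_eq_prod_realEmbeddings htr, pow_mul, ← htr, ← Finset.card_univ, ← Finset.prod_const]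
  refine Finset.prod_le_prod (fun ν _ => ?_) (fun ν _ => ?_) <;>
    rw [RingHom.map_dotProduct_mulVec, Function.comp_def, hx]
  · exact (hpos ν).posSemidef.dotProduct_mulVec_nonneg _
  · exact hC ν

end FormsOverTotallyRealFields

theorem min_le_sigma_mul_det_general
    (K : Type*) [Field K] [NumberField K]
    (htr : Fintype.card (K →+* ℝ) = finrank ℚ K)
    (n : ℕ) (hn : 1 ≤ n)
    (Q : Matrix (Fin n) (Fin n) K)
    (hpos : ∀ ν : K →+* ℝ, (Q.map fun a => ν a).PosDef) :
    ∃ x : Fin n → 𝓞 K, x ≠ 0 ∧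
      (Algebra.norm ℚ ((fun i => (x i : K)) ⬝ᵥ Q.mulVec fun i => (x i : K)) : ℝ) ≤
        (4 : ℝ) ^ (finrank ℚ K) *
          (Real.pi ^ ((n : ℝ) / 2) / Real.Gamma ((n : ℝ) / 2 + 1)) ^
            (-(2 * (finrank ℚ K : ℝ)) / (n : ℝ)) *
          |(NumberField.discr K : ℝ)| *
          (Algebra.norm ℚ Q.det : ℝ) ^ ((1 : ℝ) / (n : ℝ)) := by
  have : Nonempty (Fin n) := ⟨⟨0, hn⟩⟩
  have hN : 0 ≤ (Algebra.norm ℚ Q.det : ℝ) := by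
    rw [norm_det_eq_prod_det_map htr]; exact Finset.prod_nonneg fun ν _ => (hpos ν).det_pos.le
  have hω := unitBallVolume_pos n
  set σ := (4 : ℝ) ^ finrank ℚ K * unitBallVolume n ^ (-(2 * (finrank ℚ K : ℝ)) / (n : ℝ)) *
    |(NumberField.discr K : ℝ)| * (Algebra.norm ℚ Q.det : ℝ) ^ ((1 : ℝ) / (n : ℝ))
  set r := σ ^ ((2 * finrank ℚ K : ℕ)⁻¹ : ℝ)
  have hr : r ^ (2 * finrank ℚ K) = σ :=
    Real.rpow_inv_natCast_pow (by positivity) (mul_pos two_pos finrank_pos).ne'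
  obtain ⟨x, hx0, hx⟩ :=
    exists_ne_zero_norm_dotProduct_mulVec_le htr hpos (r := r) (by positivity) <| by
      rw [Fintype.card_fin, pow_mul_pow_eq_of_pow_two_mul_eq (by omega) hω (abs_nonneg _) hN
        (by positivity) hr]
  exact ⟨x, hx0, hx.trans_eq hr⟩

/-- Hermite-type inequality over a totally real number field K: every positive definite
quadratic form Q in n variables over K has min(Q) ≤ σ_{n,K} · N(det Q)^{1/n}, i.e. there is a
nonzero integral vector x with N(Q(x)) ≤ σ_{n,K} · N(det Q)^{1/n}. -/
theorem min_le_sigma_mul_det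
    (K : Type*) [Field K] [NumberField K]
    (htr : Fintype.card (K →+* ℝ) = finrank ℚ K)
    (n : ℕ) (hn : 1 ≤ n)
    (Q : Matrix (Fin n) (Fin n) K) (hsymm : Q.IsSymm)
    (hpos : ∀ ν : K →+* ℝ, (Q.map fun a => ν a).PosDef) :
    ∃ x : Fin n → 𝓞 K, x ≠ 0 ∧
      (Algebra.norm ℚ ((fun i => (x i : K)) ⬝ᵥ Q.mulVec fun i => (x i : K)) : ℝ) ≤
        (4 : ℝ) ^ (finrank ℚ K) *
          (Real.pi ^ ((n : ℝ) / 2) / Real.Gamma ((n : ℝ) / 2 + 1)) ^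
            (-(2 * (finrank ℚ K : ℝ)) / (n : ℝ)) *
          |(NumberField.discr K : ℝ)| *
          (Algebra.norm ℚ Q.det : ℝ) ^ ((1 : ℝ) / (n : ℝ)) :=
  min_le_sigma_mul_det_general K htr n hn Q hpos
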